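/- Let A ∈ ℝ^{k×ℓ}, B ∈ ℝ^{k×m}, c ∈ ℝ^ℓ, b ∈ ℝ^k. Let D ⊆ ℝ^m be the set of vectors x for which the linear program Primal(x): max{ c⊤z : Az ≤ Bx + b, z ≥ 0 } is feasible and bounded, and let φ : D → ℝ assign to x the optimum value of Primal(x). Then for every x ∈ D, a vector g ∈ ℝ^m is a supergradient of φ at x (i.e., φ(x) + ⟨g, t − x⟩ ≥ φ(t) for all t ∈ D) if and only if g = B⊤π for some optimal solution π ≥ 0 of the dual program Dual(x): min{ x⊤B⊤π + b⊤π : A⊤π ≥ c, π ≥ 0 }. -/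

import Mathlib

open scoped BigOperators

noncomputable section

/-- Scalar product `⟨p, x⟩ = ∑ j p_j x_j`. -/
def dot {N : Type*} [Fintype N] (p x : N → ℝ) : ℝ := ∑ j, p j * x j

/-- Feasible solutions of the parametric primal LP `Primal(x)`:
`z ≥ 0` with `A z ≤ B x + b`. -/
def PrimalFeasible {K L N : Type*} [Fintype K] [Fintype L] [Fintype N]
    (A : Matrix K L ℝ) (B : Matrix K N ℝ) (b : K → ℝ) (x : N → ℝ) (z : L → ℝ) :
    Prop :=
  0 ≤ z ∧ A.mulVec z ≤ B.mulVec x + b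

/-- The set `D` of parameters `x` for which `Primal(x)` is feasible and bounded. -/
def Dset {K L N : Type*} [Fintype K] [Fintype L] [Fintype N]
    (A : Matrix K L ℝ) (B : Matrix K N ℝ) (c : L → ℝ) (b : K → ℝ) :
    Set (N → ℝ) :=
  {x | (∃ z : L → ℝ, PrimalFeasible A B b x z) ∧
    BddAbove ((fun z => dotProduct c z) '' {z | PrimalFeasible A B b x z})}

/-- The optimum value `φ(x)` of `Primal(x)`. -/
noncomputable def lpValue {K L N : Type*} [Fintype K] [Fintype L] [Fintype N]
    (A : Matrix K L ℝ) (B : Matrix K N ℝ) (c : L → ℝ) (b : K → ℝ) (x : N → ℝ) :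
    ℝ :=
  sSup ((fun z => dotProduct c z) '' {z | PrimalFeasible A B b x z})

/-- Feasible solutions of the dual LP: `π ≥ 0` with `Aᵀ π ≥ c`. -/
def DualFeasible {K L : Type*} [Fintype K] [Fintype L]
    (A : Matrix K L ℝ) (c : L → ℝ) (π : K → ℝ) : Prop :=
  0 ≤ π ∧ c ≤ A.transpose.mulVec π

/-- The objective `x⊤ B⊤ π + b⊤ π` of the dual LP `Dual(x)`. -/
def dualObj {K N : Type*} [Fintype K] [Fintype N]
    (B : Matrix K N ℝ) (b : K → ℝ) (x : N → ℝ) (π : K → ℝ) : ℝ :=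
  dotProduct (B.mulVec x) π + dotProduct b π


section FarkasAux

open scoped InnerProductSpace
open Finset

private lemma cone_caratheodory {ι E : Type*} [Fintype ι] [DecidableEq ι]
    [AddCommGroup E] [Module ℝ E] (v : ι → E) :
    ∀ s : Finset ι, ∀ z : ι → ℝ, (∀ i ∈ s, 0 ≤ z i) →
    ∃ (t : Finset ι) (y : ι → ℝ), t ⊆ s ∧ LinearIndependent ℝ (fun i : t => v i) ∧
      (∀ i ∈ t, 0 ≤ y i) ∧ ∑ i ∈ t, y i • v i = ∑ i ∈ s, z i • v i := by
  classical
  refine Finset.strongInduction ?_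
  intro s IH z hz
  by_cases hind : LinearIndependent ℝ (fun i : s => v i)
  · exact ⟨s, z, Finset.Subset.refl s, hind, hz, rfl⟩
  obtain ⟨g, hgsum, i₁, hgne⟩ := Fintype.not_linearIndependent_iff.mp hind
  -- extend g to ι
  set d0 : ι → ℝ := fun i => if h : i ∈ s then g ⟨i, h⟩ else 0 with hd0
  have hsum0 : ∑ i ∈ s, d0 i • v i = 0 := by
    rw [← Finset.sum_attach s (fun i => d0 i • v i)]
    rw [← hgsum]
    apply Finset.sum_congr rfl
    intro i _
    simp [hd0, i.2]
  have hd0ne : d0 (i₁ : ι) ≠ 0 := by simp [hd0, i₁.2]; exact hgne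
  -- pick a d with a positive entry on s
  obtain ⟨d, hdsum, i₂, hi₂s, hdpos⟩ :
      ∃ d : ι → ℝ, ∑ i ∈ s, d i • v i = 0 ∧ ∃ i ∈ s, 0 < d i := by
    rcases lt_trichotomy (d0 (i₁ : ι)) 0 with h | h | h
    · refine ⟨-d0, ?_, i₁, i₁.2, by simpa using h⟩
      simp only [Pi.neg_apply, neg_smul, Finset.sum_neg_distrib, hsum0, neg_zero]
    · exact absurd h hd0ne
    · exact ⟨d0, hsum0, i₁, i₁.2, h⟩
  set T : Finset ι := s.filter (fun i => 0 < d i) with hT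
  have hTne : T.Nonempty := ⟨i₂, by simp [hT, hi₂s, hdpos]⟩
  set τ : ℝ := T.inf' hTne (fun i => z i / d i) with hτ
  have hτ0 : 0 ≤ τ := by
    apply Finset.le_inf'
    intro i hi
    rw [hT, Finset.mem_filter] at hi
    exact div_nonneg (hz i hi.1) hi.2.le
  obtain ⟨i₀, hi₀T, hτeq⟩ := Finset.exists_mem_eq_inf' hTne (fun i => z i / d i)
  have hi₀TF : i₀ ∈ s.filter (fun i => 0 < d i) := hi₀T
  have hi₀s : i₀ ∈ s := (Finset.mem_filter.mp hi₀TF).1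
  have hdi₀ : 0 < d i₀ := (Finset.mem_filter.mp hi₀TF).2
  set z' : ι → ℝ := fun i => z i - τ * d i with hz'
  have hz'nonneg : ∀ i ∈ s, 0 ≤ z' i := by
    intro i hi
    by_cases hd : 0 < d i
    · have : τ ≤ z i / d i := Finset.inf'_le _ (by simp [hT, hi, hd])
      rw [hz']; simp only [sub_nonneg]
      exact (le_div_iff₀ hd).mp this
    · push_neg at hd
      have : τ * d i ≤ 0 := mul_nonpos_of_nonneg_of_nonpos hτ0 hd
      rw [hz']; simp only [sub_nonneg]
      linarith [hz i hi]
  have hz'i₀ : z' i₀ = 0 := by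
    show z i₀ - τ * d i₀ = 0
    rw [hτ, hτeq]
    field_simp
    ring
  have hsum' : ∑ i ∈ s, z' i • v i = ∑ i ∈ s, z i • v i := by
    simp only [hz', sub_smul, Finset.sum_sub_distrib, mul_smul]
    rw [← Finset.smul_sum, hdsum, smul_zero, sub_zero]
  have herase : ∑ i ∈ s.erase i₀, z' i • v i = ∑ i ∈ s, z' i • v i :=
    Finset.sum_erase _ (by rw [hz'i₀, zero_smul])
  obtain ⟨t, y, hts, hind', hy, hysum⟩ :=
    IH (s.erase i₀) (Finset.erase_ssubset hi₀s) z' (fun i hi => hz'nonneg i (Finset.mem_of_mem_erase hi))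
  exact ⟨t, y, hts.trans (Finset.erase_subset _ _), hind', hy, by rw [hysum, herase, hsum']⟩

private lemma isClosed_coneSet {ι E : Type*} [Fintype ι]
    [NormedAddCommGroup E] [NormedSpace ℝ E] [FiniteDimensional ℝ E] (v : ι → E) :
    IsClosed {w : E | ∃ z : ι → ℝ, (∀ i, 0 ≤ z i) ∧ w = ∑ i, z i • v i} := by
  classical
  have ite_sum : ∀ (t : Finset ι) (y : ι → ℝ),
      ∑ i, (if i ∈ t then y i else 0) • v i = ∑ i ∈ t, y i • v i := by
    intro t y
    rw [← Fintype.sum_ite_mem t (fun i => y i • v i)]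
    exact Finset.sum_congr rfl (fun i _ => by split <;> simp)
  have key : {w : E | ∃ z : ι → ℝ, (∀ i, 0 ≤ z i) ∧ w = ∑ i, z i • v i} =
      ⋃ t : {t : Finset ι // LinearIndependent ℝ (fun i : t => v i)},
        {w : E | ∃ y : ι → ℝ, (∀ i, 0 ≤ y i) ∧ w = ∑ i ∈ (t : Finset ι), y i • v i} := by
    ext w
    simp only [Set.mem_iUnion, Set.mem_setOf_eq]
    constructor
    · rintro ⟨z, hz, rfl⟩
      obtain ⟨t, y, -, hind, hy, hsum⟩ := cone_caratheodory v Finset.univ z (fun i _ => hz i)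
      refine ⟨⟨t, hind⟩, fun i => if i ∈ t then y i else 0, fun i => ?_, ?_⟩
      · dsimp only; split
        · exact hy _ ‹_›
        · exact le_refl 0
      · rw [← hsum]
        exact (Finset.sum_congr rfl (fun i hi => by simp only [if_pos hi])).symm
    · rintro ⟨t, y, hy, rfl⟩
      exact ⟨fun i => if i ∈ (t : Finset ι) then y i else 0,
        fun i => by dsimp only; split; exacts [hy _, le_refl 0], (ite_sum _ _).symm⟩
  rw [key]
  apply isClosed_iUnion_of_finite
  rintro ⟨t, hind⟩
  let f : (t → ℝ) →ₗ[ℝ] E := ∑ i : t, (LinearMap.proj i : (t → ℝ) →ₗ[ℝ] ℝ).smulRight (v ↑i)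
  have hf : ∀ y : t → ℝ, f y = ∑ i : t, y i • v ↑i := by
    intro y
    simp [f, LinearMap.sum_apply, LinearMap.smulRight_apply, LinearMap.proj_apply]
  have hker : LinearMap.ker f = ⊥ := by
    rw [LinearMap.ker_eq_bot']
    intro y hy
    rw [hf] at hy
    funext i
    exact Fintype.linearIndependent_iff.mp hind y hy i
  have hset : {w : E | ∃ y : ι → ℝ, (∀ i, 0 ≤ y i) ∧ w = ∑ i ∈ (t : Finset ι), y i • v i}
      = f '' {y : t → ℝ | ∀ i, 0 ≤ y i} := by
    ext w
    constructor
    · rintro ⟨y, hy, rfl⟩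
      exact ⟨fun i => y ↑i, fun i => hy ↑i, by
        rw [hf]; exact Finset.sum_coe_sort t (fun i => y i • v i)⟩
    · rintro ⟨y, hy, rfl⟩
      refine ⟨fun i => if h : i ∈ t then y ⟨i, h⟩ else 0, fun i => ?_, ?_⟩
      · dsimp only; split
        · exact hy _
        · exact le_refl 0
      · rw [hf, ← Finset.sum_coe_sort t
          (fun i => (if h : i ∈ t then y ⟨i, h⟩ else 0) • v i)]
        exact (Finset.sum_congr rfl (fun i _ => by simp only [dif_pos i.2])).symm
  rw [hset]
  have hcl : IsClosed {y : t → ℝ | ∀ i, 0 ≤ y i} := by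
    have : {y : t → ℝ | ∀ i, 0 ≤ y i} = ⋂ i, {y | 0 ≤ y i} := by
      ext y; simp [Set.mem_iInter]
    rw [this]
    exact isClosed_iInter fun i => isClosed_le continuous_const (continuous_apply i)
  exact (LinearMap.isClosedEmbedding_of_injective hker).isClosedMap _ hcl

private lemma farkas {K L : Type*} [Fintype K] [Fintype L] (M : Matrix K L ℝ) (q : K → ℝ)
    (h : ¬ ∃ z : L → ℝ, 0 ≤ z ∧ M.mulVec z ≤ q) :
    ∃ y : K → ℝ, 0 ≤ y ∧ 0 ≤ M.transpose.mulVec y ∧ dotProduct q y < 0 := by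
  classical
  set v : L ⊕ K → (K → ℝ) := Sum.elim (fun j k => M k j) (fun i => Pi.single i 1) with hv
  set C : Set (K → ℝ) := {w | ∃ z : L ⊕ K → ℝ, (∀ i, 0 ≤ z i) ∧ w = ∑ i, z i • v i} with hC
  have hL : ∀ z : L → ℝ, ∑ j : L, z j • (fun k => M k j : K → ℝ) = M.mulVec z := by
    intro z; funext k
    rw [Finset.sum_apply]
    simp [Matrix.mulVec, dotProduct, mul_comm]
  have hK : ∀ s : K → ℝ, ∑ i : K, s i • (Pi.single i 1 : K → ℝ) = s := by
    intro s; funext k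
    rw [Finset.sum_apply]
    simp [Pi.single_apply]
  have memC : ∀ w, w ∈ C ↔
      ∃ z : L → ℝ, ∃ s : K → ℝ, 0 ≤ z ∧ 0 ≤ s ∧ w = M.mulVec z + s := by
    intro w
    constructor
    · rintro ⟨z, hz, rfl⟩
      refine ⟨fun j => z (Sum.inl j), fun i => z (Sum.inr i),
        fun j => hz _, fun i => hz _, ?_⟩
      rw [Fintype.sum_sum_type]
      simp only [hv, Sum.elim_inl, Sum.elim_inr]
      rw [hL, hK]
    · rintro ⟨z, s, hz, hs, rfl⟩
      refine ⟨Sum.elim z s, fun i => by cases i <;> [exact hz _; exact hs _], ?_⟩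
      rw [Fintype.sum_sum_type]
      simp only [hv, Sum.elim_inl, Sum.elim_inr]
      rw [hL, hK]
  have hqC : q ∉ C := by
    intro hq
    obtain ⟨z, s, hz, hs, heq⟩ := (memC q).mp hq
    exact h ⟨z, hz, fun k => by rw [heq]; exact le_add_of_nonneg_right (hs k)⟩
  have C0 : (0 : K → ℝ) ∈ C := ⟨0, fun i => le_refl 0, by simp⟩
  have Csmul : ∀ c : ℝ, 0 < c → ∀ w ∈ C, c • w ∈ C := by
    rintro c hc w ⟨z, hz, rfl⟩
    exact ⟨fun i => c * z i, fun i => mul_nonneg hc.le (hz i), by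
      rw [Finset.smul_sum]
      exact Finset.sum_congr rfl fun i _ => by dsimp only; rw [smul_smul]⟩
  have Cadd : ∀ w₁ ∈ C, ∀ w₂ ∈ C, w₁ + w₂ ∈ C := by
    rintro w₁ ⟨z₁, hz₁, rfl⟩ w₂ ⟨z₂, hz₂, rfl⟩
    exact ⟨z₁ + z₂, fun i => add_nonneg (hz₁ i) (hz₂ i), by
      rw [← Finset.sum_add_distrib]
      exact Finset.sum_congr rfl fun i _ => (add_smul (z₁ i) (z₂ i) (v i)).symm⟩
  -- transport to EuclideanSpace
  let e : EuclideanSpace ℝ K ≃L[ℝ] (K → ℝ) := PiLp.continuousLinearEquiv 2 ℝ (fun _ : K => ℝ)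
  let Chat : ConvexCone ℝ (EuclideanSpace ℝ K) :=
    { carrier := e ⁻¹' C
      smul_mem' := fun c hc x hx => by
        simp only [Set.mem_preimage, map_smul]
        exact Csmul c hc _ hx
      add_mem' := fun x hx y hy => by
        simp only [Set.mem_preimage, map_add]
        exact Cadd _ hx _ hy }
  have hne : (Chat : Set (EuclideanSpace ℝ K)).Nonempty :=
    ⟨0, by show e 0 ∈ C; rw [map_zero]; exact C0⟩
  have hcl : IsClosed (Chat : Set (EuclideanSpace ℝ K)) :=
    (isClosed_coneSet v).preimage e.continuous
  have hqmem : e.symm q ∉ Chat := by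
    intro hq
    have : e (e.symm q) ∈ C := hq
    rw [e.apply_symm_apply] at this
    exact hqC this
  obtain ⟨y, hy1, hy2⟩ :=
    ProperCone.hyperplane_separation' (⟨Chat.toPointedCone (ConvexCone.Pointed.of_nonempty_of_isClosed hne hcl), hcl⟩ : ProperCone ℝ (EuclideanSpace ℝ K)) hqmem
  have hinner : ∀ a b : EuclideanSpace ℝ K, ⟪a, b⟫_ℝ = ∑ k, e a k * e b k := by
    intro a b
    simp [PiLp.inner_apply, RCLike.inner_apply, e]
    exact Finset.sum_congr rfl (fun _ _ => mul_comm _ _)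
  set yf : K → ℝ := e y with hyf
  have hgen : ∀ i, v i ∈ C := by
    intro i
    refine ⟨fun i' => if i' = i then 1 else 0, fun i' => by dsimp only; split <;> norm_num, ?_⟩
    simp [ite_smul]
  have hmemhat : ∀ w ∈ C, 0 ≤ ∑ k, w k * yf k := by
    intro w hw
    have : e.symm w ∈ Chat := by
      show e (e.symm w) ∈ C; rwa [e.apply_symm_apply]
    have h0 := hy1 _ this
    rwa [hinner, e.apply_symm_apply] at h0
  refine ⟨yf, ?_, ?_, ?_⟩
  · intro i
    have h0 := hmemhat _ (hgen (Sum.inr i))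
    simpa [hv, Pi.single_apply, ite_mul] using h0
  · intro j
    have h0 := hmemhat _ (hgen (Sum.inl j))
    simp only [hv, Sum.elim_inl] at h0
    simpa [Matrix.mulVec, dotProduct, Matrix.transpose_apply] using h0
  · rw [hinner, e.apply_symm_apply] at hy2
    have : dotProduct q yf = ∑ k, e y k * q k := by
      simp [dotProduct, hyf, mul_comm]
    rw [this]
    simpa only [mul_comm] using hy2

section LPAux

variable {K L N : Type*} [Fintype K] [Fintype L] [Fintype N]

lemma dualObj_eq (B : Matrix K N ℝ) (b : K → ℝ) (x : N → ℝ) (π : K → ℝ) :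
    dualObj B b x π = dotProduct (B.mulVec x + b) π := by
  rw [dualObj, add_dotProduct]

lemma weak_duality {A : Matrix K L ℝ} {B : Matrix K N ℝ} {c : L → ℝ} {b : K → ℝ}
    {x : N → ℝ} {z : L → ℝ} {π : K → ℝ}
    (hz : PrimalFeasible A B b x z) (hπ : DualFeasible A c π) :
    dotProduct c z ≤ dualObj B b x π := by
  obtain ⟨hz0, hzle⟩ := hz
  obtain ⟨hπ0, hπc⟩ := hπ
  have h1 : dotProduct c z ≤ dotProduct (A.transpose.mulVec π) z :=
    Finset.sum_le_sum fun j _ => mul_le_mul_of_nonneg_right (hπc j) (hz0 j)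
  have h2 : dotProduct (A.transpose.mulVec π) z
      = dotProduct π (A.mulVec z) := by
    rw [Matrix.mulVec_transpose, ← Matrix.dotProduct_mulVec]
  have h3 : dotProduct π (A.mulVec z)
      ≤ dotProduct π (B.mulVec x + b) :=
    Finset.sum_le_sum fun i _ => mul_le_mul_of_nonneg_left (hzle i) (hπ0 i)
  rw [dualObj_eq, dotProduct_comm (B.mulVec x + b) π]
  exact (h1.trans_eq h2).trans h3

lemma lpValue_le {A : Matrix K L ℝ} {B : Matrix K N ℝ} {c : L → ℝ} {b : K → ℝ}
    {x : N → ℝ} (hx : x ∈ Dset A B c b) {π : K → ℝ} (hπ : DualFeasible A c π) :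
    lpValue A B c b x ≤ dualObj B b x π := by
  obtain ⟨⟨z₀, hz₀⟩, hbdd⟩ := hx
  apply csSup_le (Set.Nonempty.image _ ⟨z₀, by exact hz₀⟩)
  rintro r ⟨z, hz, rfl⟩
  exact weak_duality hz hπ

lemma le_lpValue {A : Matrix K L ℝ} {B : Matrix K N ℝ} {c : L → ℝ} {b : K → ℝ}
    {x : N → ℝ} (hx : x ∈ Dset A B c b) {z : L → ℝ} (hz : PrimalFeasible A B b x z) :
    dotProduct c z ≤ lpValue A B c b x :=
  le_csSup hx.2 ⟨z, by exact hz, rfl⟩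

lemma nat_bound_contra {δ C : ℝ} (hδ : 0 < δ) (h : ∀ n : ℕ, (n : ℝ) * δ ≤ C) :
    False := by
  obtain ⟨n, hn⟩ := exists_nat_gt (C / δ)
  have hb := h n
  rw [div_lt_iff₀ hδ] at hn
  linarith

/-- Strong duality: existence of a dual solution attaining the primal value. -/
lemma strong_duality (A : Matrix K L ℝ) (B : Matrix K N ℝ) (c : L → ℝ) (b : K → ℝ)
    {x : N → ℝ} (hx : x ∈ Dset A B c b) :
    ∃ π : K → ℝ, DualFeasible A c π ∧ dualObj B b x π ≤ lpValue A B c b x := by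
  classical
  set d : K → ℝ := B.mulVec x + b with hd
  set φ : ℝ := lpValue A B c b x with hφ
  set M : Matrix (L ⊕ Unit) K ℝ :=
    Matrix.of (Sum.elim (fun j i => -A i j) (fun _ i => d i)) with hM
  set q : L ⊕ Unit → ℝ := Sum.elim (fun j => -c j) (fun _ => φ) with hq
  by_cases hfeas : ∃ π : K → ℝ, 0 ≤ π ∧ M.mulVec π ≤ q
  · obtain ⟨π, hπ0, hπle⟩ := hfeas
    refine ⟨π, ⟨hπ0, fun j => ?_⟩, ?_⟩
    · have := hπle (Sum.inl j)
      simp only [hM, hq, Matrix.mulVec, dotProduct, Matrix.of_apply,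
        Sum.elim_inl, neg_mul, Finset.sum_neg_distrib, neg_le_neg_iff] at this
      simpa [Matrix.mulVec, dotProduct, Matrix.transpose_apply] using this
    · have := hπle (Sum.inr ())
      simp only [hM, hq, Matrix.mulVec, dotProduct, Matrix.of_apply,
        Sum.elim_inr] at this
      rw [dualObj_eq]
      simpa [hd, dotProduct] using this
  · exfalso
    obtain ⟨y, hy0, hyM, hyq⟩ := farkas M q hfeas
    set zz : L → ℝ := fun j => y (Sum.inl j) with hzz
    set μ : ℝ := y (Sum.inr ()) with hμ
    have hzz0 : 0 ≤ zz := fun j => hy0 (Sum.inl j)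
    have hμ0 : 0 ≤ μ := hy0 (Sum.inr ())
    have hAzz : ∀ i, A.mulVec zz i ≤ μ * d i := by
      intro i
      have h0 : (0:ℝ) ≤ M.transpose.mulVec y i := hyM i
      have hrew : M.transpose.mulVec y i = -(A.mulVec zz i) + d i * μ := by
        simp only [Matrix.mulVec, dotProduct, Matrix.transpose_apply, hM,
          Matrix.of_apply, Fintype.sum_sum_type, Finset.univ_unique,
          Finset.sum_singleton, Sum.elim_inl, Sum.elim_inr, neg_mul,
          Finset.sum_neg_distrib, hzz, hμ]
      rw [hrew] at h0
      nlinarith [h0]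
    have hczz : μ * φ < dotProduct c zz := by
      have hrew : dotProduct q y = -(dotProduct c zz) + φ * μ := by
        simp only [dotProduct, hq, Fintype.sum_sum_type, Finset.univ_unique,
          Finset.sum_singleton, Sum.elim_inl, Sum.elim_inr, neg_mul,
          Finset.sum_neg_distrib, hzz, hμ]
      rw [hrew] at hyq
      nlinarith [hyq]
    obtain ⟨⟨z₀, hz₀⟩, hbdd⟩ := hx
    rcases eq_or_lt_of_le hμ0 with hμe | hμp
    · -- μ = 0 : unboundedness
      have hA0 : ∀ i, A.mulVec zz i ≤ 0 := fun i => by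
        have := hAzz i; rw [← hμe] at this; linarith
      have hc0 : 0 < dotProduct c zz := by
        rw [← hμe] at hczz; linarith
      apply nat_bound_contra hc0 (C := φ - dotProduct c z₀)
      intro n
      have hfeasn : PrimalFeasible A B b x (z₀ + (n : ℝ) • zz) := by
        constructor
        · intro j
          have e1 : (0:ℝ) ≤ z₀ j := hz₀.1 j
          have e2 : (0:ℝ) ≤ zz j := hzz0 j
          have e3 : (0:ℝ) ≤ (n:ℝ) * zz j := mul_nonneg (Nat.cast_nonneg n) e2
          simp only [Pi.add_apply, Pi.smul_apply, smul_eq_mul, Pi.zero_apply]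
          linarith
        · intro i
          have e1 : A.mulVec z₀ i ≤ B.mulVec x i + b i := hz₀.2 i
          have e2 : (n:ℝ) * A.mulVec zz i ≤ 0 :=
            mul_nonpos_of_nonneg_of_nonpos (Nat.cast_nonneg n) (hA0 i)
          simp only [Matrix.mulVec_add, Matrix.mulVec_smul, Pi.add_apply,
            Pi.smul_apply, smul_eq_mul]
          linarith
      have := le_lpValue ⟨⟨z₀, hz₀⟩, hbdd⟩ hfeasn
      rw [dotProduct_add, dotProduct_smul] at this
      simp only [smul_eq_mul] at this
      rw [← hφ] at this
      linarith
    · -- μ > 0 : better primal point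
      have hfeasz : PrimalFeasible A B b x (μ⁻¹ • zz) := by
        constructor
        · intro j
          simp only [Pi.smul_apply, smul_eq_mul]
          exact mul_nonneg (inv_nonneg.mpr hμ0) (hzz0 j)
        · intro i
          have := hAzz i
          rw [Matrix.mulVec_smul]
          simp only [Pi.smul_apply, smul_eq_mul]
          rw [inv_mul_le_iff₀ hμp]
          calc A.mulVec zz i ≤ μ * d i := this
          _ = μ * (B.mulVec x + b) i := by rw [hd]
      have hle := le_lpValue ⟨⟨z₀, hz₀⟩, hbdd⟩ hfeasz
      rw [dotProduct_smul] at hle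
      simp only [smul_eq_mul] at hle
      rw [← hφ] at hle
      have := (inv_mul_le_iff₀ hμp).mp hle
      linarith

end LPAux
end FarkasAux

/-- Supergradients of the parametric LP optimum value `φ` on `D` are exactly the
vectors `B⊤ π` for dual optimal solutions `π` of `Dual(x)`. -/
theorem lp_supergradient_iff_dual_optimal {K L N : Type*}
    [Fintype K] [Fintype L] [Fintype N]
    (A : Matrix K L ℝ) (B : Matrix K N ℝ) (c : L → ℝ) (b : K → ℝ) :
    ∀ x ∈ Dset A B c b, ∀ g : N → ℝ,
      ((∀ t ∈ Dset A B c b,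
          lpValue A B c b t ≤ lpValue A B c b x + dot g (t - x)) ↔
        ∃ π : K → ℝ, DualFeasible A c π ∧
          (∀ π' : K → ℝ, DualFeasible A c π' → dualObj B b x π ≤ dualObj B b x π') ∧
          g = B.transpose.mulVec π) := by
  classical
  intro x hx g
  obtain ⟨πs, hπs, hπsval⟩ := strong_duality A B c b hx
  have hφle : ∀ π' : K → ℝ, DualFeasible A c π' →
      lpValue A B c b x ≤ dualObj B b x π' := fun π' hπ' => lpValue_le hx hπ'
  have hdot : ∀ (p u : N → ℝ), dot p u = dotProduct p u := fun _ _ => rfl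
  have hD : ∀ t : N → ℝ, (∃ z : L → ℝ, PrimalFeasible A B b t z) →
      t ∈ Dset A B c b := by
    intro t ht
    refine ⟨ht, ⟨dualObj B b t πs, ?_⟩⟩
    rintro r ⟨z, hz, rfl⟩
    exact weak_duality hz hπs
  obtain ⟨⟨z₀, hz₀⟩, hbdd⟩ := hx
  have hx' : x ∈ Dset A B c b := ⟨⟨z₀, hz₀⟩, hbdd⟩
  constructor
  · -- supergradient ⇒ dual optimal representation
    intro hsg
    set φ : ℝ := lpValue A B c b x with hφ
    set d : K → ℝ := B.mulVec x + b with hd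
    set M : Matrix (L ⊕ N ⊕ N ⊕ Unit) K ℝ :=
      Matrix.of (Sum.elim (fun j i => -A i j)
        (Sum.elim (fun n i => B i n) (Sum.elim (fun n i => -B i n) (fun _ i => d i))))
      with hM
    set q : L ⊕ N ⊕ N ⊕ Unit → ℝ :=
      Sum.elim (fun j => -c j) (Sum.elim (fun n => g n)
        (Sum.elim (fun n => -g n) (fun _ => φ))) with hq
    by_cases hfeas : ∃ π : K → ℝ, 0 ≤ π ∧ M.mulVec π ≤ q
    · obtain ⟨π, hπ0, hπle⟩ := hfeas
      have hdf : DualFeasible A c π := by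
        refine ⟨hπ0, fun j => ?_⟩
        have h1 : M.mulVec π (Sum.inl j) ≤ q (Sum.inl j) := hπle (Sum.inl j)
        have hr : M.mulVec π (Sum.inl j) = -(A.transpose.mulVec π j) := by
          simp [hM, Matrix.mulVec, dotProduct, Matrix.transpose_apply,
            neg_mul, Finset.sum_neg_distrib]
        rw [hr] at h1
        simp only [hq, Sum.elim_inl] at h1
        linarith
      have hgeq : g = B.transpose.mulVec π := by
        funext n
        have h1 : M.mulVec π (Sum.inr (Sum.inl n)) ≤ q (Sum.inr (Sum.inl n)) :=
          hπle _
        have h2 : M.mulVec π (Sum.inr (Sum.inr (Sum.inl n)))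
            ≤ q (Sum.inr (Sum.inr (Sum.inl n))) := hπle _
        have hr1 : M.mulVec π (Sum.inr (Sum.inl n)) = B.transpose.mulVec π n := by
          simp [hM, Matrix.mulVec, dotProduct, Matrix.transpose_apply]
        have hr2 : M.mulVec π (Sum.inr (Sum.inr (Sum.inl n)))
            = -(B.transpose.mulVec π n) := by
          simp [hM, Matrix.mulVec, dotProduct, Matrix.transpose_apply,
            neg_mul, Finset.sum_neg_distrib]
        rw [hr1] at h1
        rw [hr2] at h2
        simp only [hq, Sum.elim_inl, Sum.elim_inr] at h1 h2
        linarith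
      have hval : dualObj B b x π ≤ φ := by
        have h1 : M.mulVec π (Sum.inr (Sum.inr (Sum.inr ())))
            ≤ q (Sum.inr (Sum.inr (Sum.inr ()))) := hπle _
        have hr : M.mulVec π (Sum.inr (Sum.inr (Sum.inr ())))
            = dotProduct d π := by
          simp [hM, Matrix.mulVec, dotProduct]
        rw [hr] at h1
        simp only [hq, Sum.elim_inr] at h1
        rw [dualObj_eq, ← hd]
        exact h1
      exact ⟨π, hdf, fun π' hπ' => hval.trans (hφle π' hπ'), hgeq⟩
    · exfalso
      obtain ⟨y, hy0, hyM, hyq⟩ := farkas M q hfeas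
      set zz : L → ℝ := fun j => y (Sum.inl j) with hzz
      set u : N → ℝ := fun n => y (Sum.inr (Sum.inl n)) with hu
      set w : N → ℝ := fun n => y (Sum.inr (Sum.inr (Sum.inl n))) with hw
      set μ : ℝ := y (Sum.inr (Sum.inr (Sum.inr ()))) with hμ
      have hzz0 : 0 ≤ zz := fun j => hy0 (Sum.inl j)
      have hμ0 : 0 ≤ μ := hy0 (Sum.inr (Sum.inr (Sum.inr ())))
      set wv : N → ℝ := w - u with hwv
      have hrowK : ∀ i, A.mulVec zz i + B.mulVec wv i ≤ μ * d i := by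
        intro i
        have h0 : (0:ℝ) ≤ M.transpose.mulVec y i := hyM i
        have hrew : M.transpose.mulVec y i
            = -(A.mulVec zz i) + B.mulVec u i - B.mulVec w i + d i * μ := by
          simp only [Matrix.mulVec, dotProduct, Matrix.transpose_apply, hM,
            Matrix.of_apply, Fintype.sum_sum_type, Finset.univ_unique,
            Finset.sum_singleton, Sum.elim_inl, Sum.elim_inr, neg_mul,
            Finset.sum_neg_distrib, hzz, hu, hw, hμ]
          ring
        rw [hrew] at h0
        have hBwv : B.mulVec wv i = B.mulVec w i - B.mulVec u i := by
          rw [hwv, Matrix.mulVec_sub]; rfl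
        rw [hBwv]
        nlinarith [h0]
      have hobj : μ * φ < dotProduct c zz + dotProduct g wv := by
        have hrew : dotProduct q y
            = -(dotProduct c zz) + dotProduct g u
              - dotProduct g w + φ * μ := by
          simp only [dotProduct, hq, Fintype.sum_sum_type, Finset.univ_unique,
            Finset.sum_singleton, Sum.elim_inl, Sum.elim_inr, neg_mul,
            Finset.sum_neg_distrib, hzz, hu, hw, hμ]
          ring
        rw [hrew] at hyq
        have : dotProduct g wv
            = dotProduct g w - dotProduct g u := by
          rw [hwv, dotProduct_sub]
        rw [this]
        nlinarith [hyq]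
      rcases eq_or_lt_of_le hμ0 with hμe | hμp
      · -- μ = 0 : contradiction with boundedness of supergradient inequality
        have hA0 : ∀ i, A.mulVec zz i + B.mulVec wv i ≤ 0 := fun i => by
          have := hrowK i; rw [← hμe] at this; linarith
        have hδ : 0 < dotProduct c zz + dotProduct g wv := by
          rw [← hμe] at hobj; linarith
        apply nat_bound_contra hδ (C := φ - dotProduct c z₀)
        intro n
        have hfeasn : PrimalFeasible A B b (x - (n:ℝ) • wv) (z₀ + (n:ℝ) • zz) := by
          constructor
          · intro j
            have e1 : (0:ℝ) ≤ z₀ j := hz₀.1 j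
            have e2 : (0:ℝ) ≤ (n:ℝ) * zz j := mul_nonneg (Nat.cast_nonneg n) (hzz0 j)
            simp only [Pi.add_apply, Pi.smul_apply, smul_eq_mul, Pi.zero_apply]
            linarith
          · intro i
            have e1 : A.mulVec z₀ i ≤ B.mulVec x i + b i := hz₀.2 i
            have e2 : (n:ℝ) * (A.mulVec zz i + B.mulVec wv i) ≤ 0 :=
              mul_nonpos_of_nonneg_of_nonpos (Nat.cast_nonneg n) (hA0 i)
            simp only [Matrix.mulVec_add, Matrix.mulVec_smul, Matrix.mulVec_sub,
              Pi.add_apply, Pi.sub_apply, Pi.smul_apply, smul_eq_mul]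
            nlinarith [e1, e2]
        have htD : (x - (n:ℝ) • wv) ∈ Dset A B c b :=
          hD _ ⟨_, hfeasn⟩
        have hlow := le_lpValue htD hfeasn
        have hup := hsg _ htD
        have hteq : (x - (n:ℝ) • wv) - x = -((n:ℝ) • wv) := by
          abel
        rw [hteq, hdot, dotProduct_neg, dotProduct_smul] at hup
        rw [dotProduct_add, dotProduct_smul] at hlow
        simp only [smul_eq_mul] at hup hlow
        linarith
      · -- μ > 0
        have hfeast : PrimalFeasible A B b (x - μ⁻¹ • wv) (μ⁻¹ • zz) := by
          constructor
          · intro j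
            simp only [Pi.smul_apply, smul_eq_mul, Pi.zero_apply]
            exact mul_nonneg (inv_nonneg.mpr hμ0) (hzz0 j)
          · intro i
            have e1 := hrowK i
            simp only [Matrix.mulVec_smul, Matrix.mulVec_sub, Pi.add_apply,
              Pi.sub_apply, Pi.smul_apply, smul_eq_mul]
            rw [hd] at e1
            simp only [Pi.add_apply] at e1
            have hμne : μ ≠ 0 := ne_of_gt hμp
            have := mul_le_mul_of_nonneg_left e1 (inv_nonneg.mpr hμ0)
            rw [mul_add, inv_mul_cancel_left₀ hμne] at this
            linarith
        have htD : (x - μ⁻¹ • wv) ∈ Dset A B c b := hD _ ⟨_, hfeast⟩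
        have hlow := le_lpValue htD hfeast
        have hup := hsg _ htD
        have hteq : (x - μ⁻¹ • wv) - x = -(μ⁻¹ • wv) := by abel
        rw [hteq, hdot, dotProduct_neg, dotProduct_smul] at hup
        rw [dotProduct_smul] at hlow
        simp only [smul_eq_mul] at hup hlow
        have hmul := mul_lt_mul_of_pos_left hobj (inv_pos.mpr hμp)
        rw [mul_add, inv_mul_cancel_left₀ (ne_of_gt hμp)] at hmul
        linarith
  · -- dual optimal ⇒ supergradient
    rintro ⟨π, hπf, hπopt, rfl⟩
    intro t ht
    have h1 : lpValue A B c b t ≤ dualObj B b t π := lpValue_le ht hπf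
    have h2 : dualObj B b x π = lpValue A B c b x :=
      le_antisymm ((hπopt πs hπs).trans hπsval) (hφle π hπf)
    have h3 : dualObj B b t π
        = dualObj B b x π + dot (B.transpose.mulVec π) (t - x) := by
      rw [hdot, dualObj, dualObj, Matrix.mulVec_transpose,
        ← Matrix.dotProduct_mulVec, Matrix.mulVec_sub,
        dotProduct_comm π (B.mulVec t - B.mulVec x),
        sub_dotProduct]
      ring
    linarith

end
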